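/- arXiv:2108.07193 — 2 statements merged into one kernel-verified Lean document; each statement's English description precedes it below -/
import Mathlib

section
/- Let u : ℝⁿ → ℝᵐ be 1-Lipschitz and let S₁, S₂ be two distinct leaves of u. Then S₁ ∩ S₂ ⊆ ∂S₁ ∩ ∂S₂, where ∂Sᵢ denotes the relative boundary of the (closed convex) leaf Sᵢ. -/
/-!
If a point `x` of a leaf `S₂` lay in the relative interior of another leaf `S₁`, then every
`z ∈ S₁` would be the endpoint of a segment `[z, x']` in `S₁` containing `x` in its interior.
A `1`-Lipschitz map preserving the length of a segment is affine on it, so for any `y` with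
`|u y - u x| = |y - x|` the function `s ↦ |y - z - s (x' - z)|² - |u y - u z - s (u x' - u z)|²`
is affine, nonnegative at `s = 0, 1` and zero at the interior parameter of `x`; hence it
vanishes identically, and `|u y - u z| = |y - z|`. Thus `u` is isometric on `S₁ ∪ S₂`, and
maximality of both leaves forces `S₁ = S₂`.
-/

/-- A set `S ⊆ ℝⁿ` is a *leaf* of `u : ℝⁿ → ℝᵐ` if `u` restricted to `S` is an isometry
and `S` is maximal with this property. -/
def IsLeaf {n m : ℕ} (u : EuclideanSpace ℝ (Fin n) → EuclideanSpace ℝ (Fin m))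
    (S : Set (EuclideanSpace ℝ (Fin n))) : Prop :=
  (∀ x ∈ S, ∀ y ∈ S, ‖u x - u y‖ = ‖x - y‖) ∧
  ∀ y ∉ S, ∃ x ∈ S, ‖u y - u x‖ < ‖y - x‖

open Set AffineMap Filter Topology

theorem exists_lineMap_eq_of_mem_intrinsicInterior {E : Type*} [NormedAddCommGroup E]
    [NormedSpace ℝ E] {s : Set E} {x z : E} (hx : x ∈ intrinsicInterior ℝ s)
    (hz : z ∈ affineSpan ℝ s) : ∃ y ∈ s, ∃ t ∈ Ioo (0 : ℝ) 1, lineMap z y t = x := by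
  obtain ⟨⟨x, hxA⟩, hint, rfl⟩ := hx
  let g : ℝ → affineSpan ℝ s := fun r => ⟨lineMap z x r, lineMap_mem r hz hxA⟩
  have hg : Continuous g := lineMap_continuous.subtype_mk _
  have hg1 : g 1 = ⟨x, hxA⟩ := Subtype.ext (lineMap_apply_one z x)
  have hnhds : ∀ᶠ r in 𝓝[>] (1 : ℝ), g r ∈ interior ((↑) ⁻¹' s) :=
    nhdsWithin_le_nhds <| hg.continuousAt.preimage_mem_nhds (hg1 ▸ isOpen_interior.mem_nhds hint)
  obtain ⟨r, hr1, hr⟩ := (eventually_mem_nhdsWithin.and hnhds).exists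
  have hr0 : (0 : ℝ) < r := one_pos.trans hr1
  refine ⟨lineMap z x r, (interior_subset hr : g r ∈ (↑) ⁻¹' s), r⁻¹,
    ⟨inv_pos.2 hr0, inv_lt_one_of_one_lt₀ hr1⟩, ?_⟩
  simp only [lineMap_apply_module', add_sub_cancel_right, smul_smul,
    inv_mul_cancel₀ hr0.ne', one_smul, sub_add_cancel]

theorem LipschitzWith.apply_lineMap_of_dist_eq {E F : Type*} [NormedAddCommGroup E]
    [NormedSpace ℝ E] [NormedAddCommGroup F] [NormedSpace ℝ F] [StrictConvexSpace ℝ F]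
    {u : E → F} (hu : LipschitzWith 1 u) {z x : E} (h : dist (u z) (u x) = dist z x) {t : ℝ}
    (ht : t ∈ Icc (0 : ℝ) 1) : u (lineMap z x t) = lineMap (u z) (u x) t := by
  have hleft : dist (u z) (u (lineMap z x t)) ≤ t * dist z x := by
    simpa [dist_left_lineMap, abs_of_nonneg ht.1] using hu.dist_le_mul z (lineMap z x t)
  have hright : dist (u (lineMap z x t)) (u x) ≤ (1 - t) * dist z x := by
    simpa [dist_lineMap_right, abs_of_nonneg (sub_nonneg.2 ht.2)] using
      hu.dist_le_mul (lineMap z x t) x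
  have htri := dist_triangle (u z) (u (lineMap z x t)) (u x)
  apply eq_lineMap_of_dist_eq_mul_of_dist_eq_mul <;> rw [h] <;> linarith

theorem norm_eq_of_norm_sub_smul_eq {E F : Type*} [NormedAddCommGroup E] [InnerProductSpace ℝ E]
    [NormedAddCommGroup F] [InnerProductSpace ℝ F] {a b : E} {p q : F} {t : ℝ}
    (ht : t ∈ Ioo (0 : ℝ) 1) (hq : ‖q‖ = ‖b‖) (hp : ‖p‖ ≤ ‖a‖) (hpq : ‖p - q‖ ≤ ‖a - b‖)
    (hpt : ‖p - t • q‖ = ‖a - t • b‖) : ‖p‖ = ‖a‖ := by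
  have gap : ∀ s : ℝ, ‖a - s • b‖ ^ 2 - ‖p - s • q‖ ^ 2 =
      (‖a‖ ^ 2 - ‖p‖ ^ 2) - 2 * s * (inner ℝ a b - inner ℝ p q) := by
    intro s
    rw [norm_sub_sq_real, norm_sub_sq_real, real_inner_smul_right, real_inner_smul_right,
      norm_smul, norm_smul, hq]
    ring
  have gap_zero := gap 0
  have gap_one := gap 1
  have gap_t := gap t
  simp only [zero_smul, sub_zero, one_smul] at gap_zero gap_one
  rw [hpt, sub_self] at gap_t
  have hp2 : ‖p‖ ^ 2 ≤ ‖a‖ ^ 2 := pow_le_pow_left₀ (norm_nonneg p) hp 2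
  have hpq2 : ‖p - q‖ ^ 2 ≤ ‖a - b‖ ^ 2 := pow_le_pow_left₀ (norm_nonneg _) hpq 2
  refine (sq_eq_sq₀ (norm_nonneg p) (norm_nonneg a)).1 ?_
  nlinarith [ht.1, ht.2]

theorem LipschitzWith.dist_eq_of_dist_eq_lineMap {E F : Type*} [NormedAddCommGroup E]
    [InnerProductSpace ℝ E] [NormedAddCommGroup F] [InnerProductSpace ℝ F] {u : E → F}
    (hu : LipschitzWith 1 u) {z x y : E} (h : dist (u z) (u x) = dist z x) {t : ℝ}
    (ht : t ∈ Ioo (0 : ℝ) 1) (hy : dist (u y) (u (lineMap z x t)) = dist y (lineMap z x t)) :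
    dist (u y) (u z) = dist y z := by
  rw [hu.apply_lineMap_of_dist_eq h (Ioo_subset_Icc_self ht)] at hy
  rw [dist_comm z, dist_comm (u z)] at h
  simp only [dist_eq_norm, lineMap_apply_module'] at h hy ⊢
  refine norm_eq_of_norm_sub_smul_eq (a := y - z) (b := x - z) (q := u x - u z) ht h ?_ ?_ ?_
  · simpa [dist_eq_norm] using hu.dist_le_mul y z
  · simpa [dist_eq_norm] using hu.dist_le_mul y x
  · rwa [sub_sub, sub_sub, add_comm (u z), add_comm z]

namespace IsLeaf

variable {n m : ℕ} {u : EuclideanSpace ℝ (Fin n) → EuclideanSpace ℝ (Fin m)}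
  {S S' : Set (EuclideanSpace ℝ (Fin n))}

theorem mem_iff (hS : IsLeaf u S) {y : EuclideanSpace ℝ (Fin n)} :
    y ∈ S ↔ ∀ x ∈ S, dist (u y) (u x) = dist y x := by
  simp only [dist_eq_norm]
  refine ⟨fun hy x hx => hS.1 y hy x hx, fun h => ?_⟩
  by_contra hy
  obtain ⟨x, hx, hlt⟩ := hS.2 y hy
  exact hlt.ne (h x hx)

theorem eq_of_mem_intrinsicInterior (hu : LipschitzWith 1 u) (hS : IsLeaf u S)
    (hS' : IsLeaf u S') {x : EuclideanSpace ℝ (Fin n)} (hx : x ∈ intrinsicInterior ℝ S)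
    (hx' : x ∈ S') : S = S' := by
  have cross : ∀ y ∈ S', ∀ z ∈ S, dist (u y) (u z) = dist y z := by
    intro y hy z hz
    obtain ⟨x', hx'S, t, ht, rfl⟩ :=
      exists_lineMap_eq_of_mem_intrinsicInterior hx (subset_affineSpan ℝ S hz)
    exact hu.dist_eq_of_dist_eq_lineMap (hS.mem_iff.1 hz x' hx'S) ht (hS'.mem_iff.1 hy _ hx')
  ext w
  refine ⟨fun hw => hS'.mem_iff.2 fun y hy => ?_, fun hw => hS.mem_iff.2 (cross w hw)⟩
  rw [dist_comm, dist_comm w]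
  exact cross y hy w hw

theorem mem_intrinsicFrontier (hu : LipschitzWith 1 u) (hS : IsLeaf u S) (hS' : IsLeaf u S')
    (hne : S ≠ S') {x : EuclideanSpace ℝ (Fin n)} (hx : x ∈ S) (hx' : x ∈ S') :
    x ∈ intrinsicFrontier ℝ S :=
  closure_sdiff_intrinsicInterior (𝕜 := ℝ) S ▸
    ⟨subset_closure hx, fun hint => hne (hS.eq_of_mem_intrinsicInterior hu hS' hint hx')⟩

end IsLeaf

/-- Two distinct leaves of a `1`-Lipschitz map `u : ℝⁿ → ℝᵐ` can only
meet along their relative boundaries: `S₁ ∩ S₂ ⊆ ∂S₁ ∩ ∂S₂`. -/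
theorem stmt_8 {n m : ℕ} (u : EuclideanSpace ℝ (Fin n) → EuclideanSpace ℝ (Fin m))
    (hu : LipschitzWith 1 u)
    (S₁ S₂ : Set (EuclideanSpace ℝ (Fin n))) (hS₁ : IsLeaf u S₁) (hS₂ : IsLeaf u S₂)
    (hne : S₁ ≠ S₂) :
    S₁ ∩ S₂ ⊆ intrinsicFrontier ℝ S₁ ∩ intrinsicFrontier ℝ S₂ := fun _ ⟨hx₁, hx₂⟩ =>
  ⟨hS₁.mem_intrinsicFrontier hu hS₂ hne hx₁ hx₂, hS₂.mem_intrinsicFrontier hu hS₁ hne.symm hx₂ hx₁⟩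
end

section
/- Let u : ℝⁿ → ℝᵐ be 1-Lipschitz, let N(u) be the set of points where u is not differentiable, and define S : ℝⁿ → {nonempty closed subsets of ℝⁿ} by: S(x) is the unique leaf of u containing x when x ∉ N(u), and S(x) = {x} when x ∈ N(u). Then for every compact set K ⊆ ℝⁿ, the set {x ∈ ℝⁿ : S(x) ∩ K ≠ ∅} is a Borel subset of ℝⁿ; consequently the same holds with K replaced by any open set U ⊆ ℝⁿ. -/
open Set AffineMap

theorem IsCompact.isClosed_setOf_exists_mem {X Y : Type*} [TopologicalSpace X]
    [TopologicalSpace Y] {K : Set Y} (hK : IsCompact K) {p : X → Y → Prop}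
    (hp : IsClosed {q : X × Y | p q.1 q.2}) : IsClosed {x | ∃ y ∈ K, p x y} := by
  have : CompactSpace K := isCompact_iff_compactSpace.mp hK
  have hpK : IsClosed {q : X × K | p q.1 q.2} :=
    hp.preimage (continuous_fst.prodMk (continuous_subtype_val.comp continuous_snd))
  convert isClosedMap_fst_of_compactSpace _ hpK using 1
  ext x
  simp

theorem IsOpen.isSigmaCompact {X : Type*} [PseudoEMetricSpace X] [SigmaCompactSpace X]
    {U : Set X} (hU : IsOpen U) : IsSigmaCompact U := by
  obtain ⟨F, hF, -, rfl, -⟩ := hU.exists_iUnion_isClosed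
  exact isSigmaCompact_iUnion _ fun n ↦
    isSigmaCompact_univ.of_isClosed_subset (hF n) (subset_univ _)

theorem IsSigmaCompact.measurableSet_setOf_inter_nonempty {X Y : Type*} [MeasurableSpace X]
    [TopologicalSpace Y] {S : X → Set Y} {s : Set Y} (hs : IsSigmaCompact s)
    (hS : ∀ K, IsCompact K → MeasurableSet {x | (S x ∩ K).Nonempty}) :
    MeasurableSet {x | (S x ∩ s).Nonempty} := by
  obtain ⟨K, hK, rfl⟩ := hs
  simp only [inter_iUnion, nonempty_iUnion, ofPred_exists]
  exact .iUnion fun n ↦ hS _ (hK n)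

section Lipschitz

variable {E F : Type*} [NormedAddCommGroup E] [NormedSpace ℝ E]
  [NormedAddCommGroup F] [NormedSpace ℝ F] {u : E → F} {x y : E}

theorem LipschitzWith.map_lineMap_of_dist_eq [StrictConvexSpace ℝ F] (hu : LipschitzWith 1 u)
    (h : dist (u x) (u y) = dist x y) {t : ℝ} (ht : t ∈ Icc (0 : ℝ) 1) :
    u (lineMap x y t) = lineMap (u x) (u y) t := by
  have hu' := hu.dist_le_mul
  simp only [NNReal.coe_one, one_mul] at hu'
  have hxz := dist_left_lineMap x y t
  have hzy := dist_lineMap_right x y t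
  rw [Real.norm_of_nonneg ht.1] at hxz
  rw [Real.norm_of_nonneg (sub_nonneg.2 ht.2)] at hzy
  have htri := dist_triangle (u x) (u (lineMap x y t)) (u y)
  have hleft := hu' x (lineMap x y t)
  have hright := hu' (lineMap x y t) y
  -- the triangle inequality turns both Lipschitz bounds into equalities
  apply eq_lineMap_of_dist_eq_mul_of_dist_eq_mul <;> rw [h] <;> linarith

theorem LipschitzWith.fderiv_apply_sub_of_dist_eq [StrictConvexSpace ℝ F] (hu : LipschitzWith 1 u)
    (hx : DifferentiableAt ℝ u x) (h : dist (u x) (u y) = dist x y) :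
    fderiv ℝ u x (y - x) = u y - u x := by
  have h0 : (0 : ℝ) ∈ Icc (0 : ℝ) 1 := left_mem_Icc.2 zero_le_one
  have hcomp :
      HasDerivWithinAt (u ∘ (lineMap x y : ℝ → E)) (fderiv ℝ u x (y - x)) (Icc 0 1) 0 := by
    have hx' : HasFDerivAt u (fderiv ℝ u x) (lineMap x y (0 : ℝ)) := by
      simpa using hx.hasFDerivAt
    exact (hx'.comp_hasDerivAt 0 hasDerivAt_lineMap).hasDerivWithinAt
  have hline : HasDerivWithinAt (u ∘ (lineMap x y : ℝ → E)) (u y - u x) (Icc 0 1) 0 :=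
    hasDerivAt_lineMap.hasDerivWithinAt.congr (fun t ht ↦ hu.map_lineMap_of_dist_eq h ht)
      (hu.map_lineMap_of_dist_eq h h0)
  exact (uniqueDiffOn_Icc zero_lt_one 0 h0).eq_deriv _ hcomp hline

end Lipschitz

theorem ContinuousLinearMap.norm_map_sub_of_norm_map_eq {E F : Type*}
    [NormedAddCommGroup E] [InnerProductSpace ℝ E] [NormedAddCommGroup F] [InnerProductSpace ℝ F]
    {f : E →L[ℝ] F} (hf : ‖f‖ ≤ 1) {a b : E} (ha : ‖f a‖ = ‖a‖) (hb : ‖f b‖ = ‖b‖) :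
    ‖f (a - b)‖ = ‖a - b‖ := by
  have hle : ∀ v, ‖f v‖ ≤ ‖v‖ := fun v ↦ f.le_of_opNorm_le hf v |>.trans_eq (one_mul _)
  refine le_antisymm (hle _) ?_
  -- parallelogram law, with `‖f a‖ = ‖a‖`, `‖f b‖ = ‖b‖` and `‖f (a + b)‖ ≤ ‖a + b‖`
  have hf_par := parallelogram_law_with_norm ℝ (f a) (f b)
  have h_par := parallelogram_law_with_norm ℝ a b
  rw [← map_add, ← map_sub, ha, hb] at hf_par
  have hadd : ‖f (a + b)‖ ^ 2 ≤ ‖a + b‖ ^ 2 := by gcongr; exact hle _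
  have hsub : ‖a - b‖ ^ 2 ≤ ‖f (a - b)‖ ^ 2 := by linarith
  exact (pow_le_pow_iff_left₀ (norm_nonneg _) (norm_nonneg _) two_ne_zero).1 hsub

theorem LipschitzWith.dist_eq_of_differentiableAt {E F : Type*}
    [NormedAddCommGroup E] [InnerProductSpace ℝ E] [NormedAddCommGroup F] [InnerProductSpace ℝ F]
    {u : E → F} (hu : LipschitzWith 1 u) {x y z : E} (hx : DifferentiableAt ℝ u x)
    (hy : dist (u x) (u y) = dist x y) (hz : dist (u x) (u z) = dist x z) :
    dist (u y) (u z) = dist y z := by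
  have hf : ‖fderiv ℝ u x‖ ≤ 1 := by simpa using norm_fderiv_le_of_lipschitz ℝ hu (x₀ := x)
  have hfy := hu.fderiv_apply_sub_of_dist_eq hx hy
  have hfz := hu.fderiv_apply_sub_of_dist_eq hx hz
  have key := (fderiv ℝ u x).norm_map_sub_of_norm_map_eq hf
    (by rw [hfy, ← dist_eq_norm, ← dist_eq_norm, dist_comm, hy, dist_comm])
    (by rw [hfz, ← dist_eq_norm, ← dist_eq_norm, dist_comm, hz, dist_comm])
  rwa [map_sub, hfy, hfz, sub_sub_sub_cancel_right, sub_sub_sub_cancel_right,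
    ← dist_eq_norm, ← dist_eq_norm] at key

theorem IsLeaf.eq_setOf_dist_eq {n m : ℕ}
    {u : EuclideanSpace ℝ (Fin n) → EuclideanSpace ℝ (Fin m)} {S : Set (EuclideanSpace ℝ (Fin n))}
    (hS : IsLeaf u S) (hu : LipschitzWith 1 u)
    {x : EuclideanSpace ℝ (Fin n)} (hx : DifferentiableAt ℝ u x) (hxS : x ∈ S) :
    S = {y | dist (u x) (u y) = dist x y} := by
  ext y
  refine ⟨fun hyS ↦ by simpa only [mem_ofPred_eq, dist_eq_norm] using hS.1 x hxS y hyS,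
    fun hy ↦ ?_⟩
  by_contra hyS
  obtain ⟨z, hzS, hlt⟩ := hS.2 y hyS
  have hz : dist (u x) (u z) = dist x z := by simpa only [dist_eq_norm] using hS.1 x hxS z hzS
  rw [← dist_eq_norm, ← dist_eq_norm, hu.dist_eq_of_differentiableAt hx hy hz] at hlt
  exact hlt.false

theorem measurableSet_setOf_leaf_inter_nonempty {n m : ℕ}
    {u : EuclideanSpace ℝ (Fin n) → EuclideanSpace ℝ (Fin m)} (hu : LipschitzWith 1 u)
    {𝒮 : EuclideanSpace ℝ (Fin n) → Set (EuclideanSpace ℝ (Fin n))}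
    (h𝒮 : ∀ x, DifferentiableAt ℝ u x → IsLeaf u (𝒮 x) ∧ x ∈ 𝒮 x)
    (h𝒮' : ∀ x, ¬ DifferentiableAt ℝ u x → 𝒮 x = {x})
    {K : Set (EuclideanSpace ℝ (Fin n))} (hK : IsCompact K) :
    MeasurableSet {x | (𝒮 x ∩ K).Nonempty} := by
  have hu_cont := hu.continuous
  have hA : IsClosed {x | ∃ y ∈ K, dist (u x) (u y) = dist x y} :=
    hK.isClosed_setOf_exists_mem <| isClosed_eq (by fun_prop) (by fun_prop)
  have hset : {x | (𝒮 x ∩ K).Nonempty} =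
      {x | DifferentiableAt ℝ u x}.ite {x | ∃ y ∈ K, dist (u x) (u y) = dist x y} K := by
    ext x
    by_cases hx : DifferentiableAt ℝ u x
    · obtain ⟨hleaf, hxS⟩ := h𝒮 x hx
      simp [Set.ite, hx, hleaf.eq_setOf_dist_eq hu hx hxS, Set.Nonempty, and_comm]
    · simp [Set.ite, hx, h𝒮' x hx]
  rw [hset]
  exact (measurableSet_of_differentiableAt ℝ u).ite hA.measurableSet hK.isClosed.measurableSet

/-- Let `u : ℝⁿ → ℝᵐ` be `1`-Lipschitz and let `𝒮` assign to each
point `x` at which `u` is differentiable the (unique) leaf of `u` containing `x`, and to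
each point of the non-differentiability set `N(u)` the singleton `{x}`.  Then for every
compact `K ⊆ ℝⁿ` the set `{x : 𝒮(x) ∩ K ≠ ∅}` is Borel, and consequently the same holds
with `K` replaced by any open set `U ⊆ ℝⁿ`. -/
theorem stmt_19 {n m : ℕ} (u : EuclideanSpace ℝ (Fin n) → EuclideanSpace ℝ (Fin m))
    (hu : LipschitzWith 1 u)
    (𝒮 : EuclideanSpace ℝ (Fin n) → Set (EuclideanSpace ℝ (Fin n)))
    (h𝒮 : ∀ x, DifferentiableAt ℝ u x → IsLeaf u (𝒮 x) ∧ x ∈ 𝒮 x)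
    (h𝒮' : ∀ x, ¬ DifferentiableAt ℝ u x → 𝒮 x = {x}) :
    (∀ K : Set (EuclideanSpace ℝ (Fin n)), IsCompact K →
      MeasurableSet {x | (𝒮 x ∩ K).Nonempty}) ∧
    (∀ U : Set (EuclideanSpace ℝ (Fin n)), IsOpen U →
      MeasurableSet {x | (𝒮 x ∩ U).Nonempty}) := by
  have hcompact : ∀ K, IsCompact K → MeasurableSet {x | (𝒮 x ∩ K).Nonempty} :=
    fun _ hK ↦ measurableSet_setOf_leaf_inter_nonempty hu h𝒮 h𝒮' hK
  exact ⟨hcompact, fun _ hU ↦ hU.isSigmaCompact.measurableSet_setOf_inter_nonempty hcompact⟩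
end
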